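/- The operators a_{i,j}(k) are compatible with the double grading of R: for all i ∈ Fin d, j ∈ ℕ, m, N ∈ ℕ and every integer k ≠ 0, if k > 0 then a_{i,j}(k)(R^{(m)}_{(N)}) ⊆ R^{(m−j)}_{(N−k)} (understood as {0} when m < j or N < k), and if k < 0 then a_{i,j}(k)(R^{(m)}_{(N)}) ⊆ R^{(m+j)}_{(N−k)}. (This is the strong-gradedness condition for the generating operators of M(l) and of its strongly ℕ-graded modules, Corollaries 6.3 and 6.4.) -/
import Mathlib


open MvPolynomial

/-- The operators `a_{i,j}(k)` of the polynomial realization of `M(l)` (with `λ = 0`):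
`a_{i,j}(k) = k·l·∂_{i,j,k}` for `k > 0`, `a_{i,j}(0) = 0`, and `a_{i,j}(k) = X_{i,j,-k}`
(multiplication) for `k < 0`. -/
noncomputable def aOp0 (d : ℕ) (l : ℂ) (i : Fin d) (j : ℕ) (k : ℤ) :
    Module.End ℂ (MvPolynomial (Fin d × ℕ × ℕ+) ℂ) :=
  if hk : 0 < k then
    ((k : ℂ) * l) • (pderiv (((i, j, ⟨k.toNat, by omega⟩) : Fin d × ℕ × ℕ+))).toLinearMap
  else if hk0 : k = 0 then
    0
  else
    LinearMap.mulLeft ℂ (X ((i, j, ⟨(-k).toNat, by omega⟩) : Fin d × ℕ × ℕ+))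

/-- The conformal weight `wt(e) = ∑_{(i,j,n)} e(i,j,n)·n` of an exponent vector. -/
def wtE (d : ℕ) (e : (Fin d × ℕ × ℕ+) →₀ ℕ) : ℕ := ∑ v ∈ e.support, e v * (v.2.2 : ℕ)

/-- The `ℕ`-weight `ℕwt(e) = ∑_{(i,j,n)} e(i,j,n)·j` of an exponent vector. -/
def nwtE (d : ℕ) (e : (Fin d × ℕ × ℕ+) →₀ ℕ) : ℕ := ∑ v ∈ e.support, e v * v.2.1

/-- The doubly homogeneous component `R^{(m)}_{(N)}`: the span of the monomials `X^e`
with `ℕwt(e) = m` and `wt(e) = N` (interpreted as `{0}` when `m < 0` or `N < 0`). -/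
noncomputable def dcomp (d : ℕ) (m N : ℤ) :
    Submodule ℂ (MvPolynomial (Fin d × ℕ × ℕ+) ℂ) :=
  Submodule.span ℂ {p | ∃ e : (Fin d × ℕ × ℕ+) →₀ ℕ,
    (nwtE d e : ℤ) = m ∧ (wtE d e : ℤ) = N ∧ p = monomial e (1 : ℂ)}

lemma wtE_def (d : ℕ) (e : (Fin d × ℕ × ℕ+) →₀ ℕ) :
    wtE d e = e.sum (fun v c => c * (v.2.2 : ℕ)) := rfl
lemma nwtE_def (d : ℕ) (e : (Fin d × ℕ × ℕ+) →₀ ℕ) :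
    nwtE d e = e.sum (fun v c => c * v.2.1) := rfl

lemma wtE_add (d : ℕ) (a b : (Fin d × ℕ × ℕ+) →₀ ℕ) :
    wtE d (a + b) = wtE d a + wtE d b := by
  simp [wtE_def, Finsupp.sum_add_index, add_mul]

lemma nwtE_add (d : ℕ) (a b : (Fin d × ℕ × ℕ+) →₀ ℕ) :
    nwtE d (a + b) = nwtE d a + nwtE d b := by
  simp [nwtE_def, Finsupp.sum_add_index, add_mul]

lemma wtE_single (d : ℕ) (v : Fin d × ℕ × ℕ+) :
    wtE d (Finsupp.single v 1) = (v.2.2 : ℕ) := by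
  simp [wtE_def, Finsupp.sum_single_index]

lemma nwtE_single (d : ℕ) (v : Fin d × ℕ × ℕ+) :
    nwtE d (Finsupp.single v 1) = v.2.1 := by
  simp [nwtE_def, Finsupp.sum_single_index]

lemma sub_add_single (d : ℕ) (e : (Fin d × ℕ × ℕ+) →₀ ℕ) (v : Fin d × ℕ × ℕ+)
    (h : e v ≠ 0) : (e - Finsupp.single v 1) + Finsupp.single v 1 = e := by
  ext w
  rcases eq_or_ne v w with rfl | hw
  · simp only [Finsupp.coe_add, Finsupp.coe_tsub, Pi.add_apply, Pi.sub_apply,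
      Finsupp.single_eq_same]
    omega
  · simp [Finsupp.sub_apply, Finsupp.single_apply, hw]

/-- Corollaries 6.3 and 6.4, strong gradedness of the generating operators:
for `k > 0`, `a_{i,j}(k)` maps `R^{(m)}_{(N)}` into `R^{(m-j)}_{(N-k)}` (which is `{0}`
when `m < j` or `N < k`), and for `k < 0` it maps `R^{(m)}_{(N)}` into `R^{(m+j)}_{(N-k)}`. -/
theorem statement11 (d : ℕ) (hd : 0 < d) (l : ℂ) (hl : l ≠ 0)
    (i : Fin d) (j : ℕ) (m N : ℕ) (k : ℤ) (hk : k ≠ 0) :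
    (0 < k → ∀ p ∈ dcomp d m N,
      aOp0 d l i j k p ∈ dcomp d ((m : ℤ) - j) ((N : ℤ) - k)) ∧
    (k < 0 → ∀ p ∈ dcomp d m N,
      aOp0 d l i j k p ∈ dcomp d ((m : ℤ) + j) ((N : ℤ) - k)) := by
  constructor
  · intro hkpos p hp
    have hop : aOp0 d l i j k =
        ((k : ℂ) * l) • (pderiv (((i, j, ⟨k.toNat, by omega⟩) : Fin d × ℕ × ℕ+))).toLinearMap := by
      simp only [aOp0, dif_pos hkpos]
    set v : Fin d × ℕ × ℕ+ := (i, j, ⟨k.toNat, by omega⟩) with hv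
    refine Submodule.span_induction ?_ ?_ ?_ ?_ hp
    · rintro p ⟨e, hm, hN, rfl⟩
      rw [hop]
      show ((k : ℂ) * l) • (pderiv v (monomial e 1)) ∈ _
      rw [pderiv_monomial]
      by_cases he : e v = 0
      · simp [he]
      · have heq : (monomial (e - Finsupp.single v 1)) ((1 : ℂ) * (e v : ℕ)) =
            ((e v : ℕ) : ℂ) • (monomial (e - Finsupp.single v 1)) (1 : ℂ) := by
          simp [smul_monomial]
        rw [heq]
        refine Submodule.smul_mem _ _ (Submodule.smul_mem _ _ (Submodule.subset_span ?_))
        refine ⟨e - Finsupp.single v 1, ?_, ?_, rfl⟩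
        · have h1 := nwtE_add d (e - Finsupp.single v 1) (Finsupp.single v 1)
          rw [sub_add_single d e v he, nwtE_single] at h1
          have hvj : v.2.1 = j := rfl
          rw [hvj] at h1
          omega
        · have h1 := wtE_add d (e - Finsupp.single v 1) (Finsupp.single v 1)
          rw [sub_add_single d e v he, wtE_single] at h1
          have hvk : (v.2.2 : ℕ) = k.toNat := rfl
          rw [hvk] at h1
          omega
    · simp
    · intro a b _ _ ha hb
      rw [map_add]; exact Submodule.add_mem _ ha hb
    · intro c a _ ha
      rw [map_smul]; exact Submodule.smul_mem _ c ha
  · intro hkneg p hp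
    have hkn : ¬ 0 < k := by omega
    have hop : aOp0 d l i j k =
        LinearMap.mulLeft ℂ (X ((i, j, ⟨(-k).toNat, by omega⟩) : Fin d × ℕ × ℕ+)) := by
      simp only [aOp0, dif_neg hkn, dif_neg hk]
    set v : Fin d × ℕ × ℕ+ := (i, j, ⟨(-k).toNat, by omega⟩) with hv
    refine Submodule.span_induction ?_ ?_ ?_ ?_ hp
    · rintro p ⟨e, hm, hN, rfl⟩
      rw [hop]
      rw [LinearMap.mulLeft_apply, X, monomial_mul, one_mul]
      refine Submodule.subset_span ⟨Finsupp.single v 1 + e, ?_, ?_, rfl⟩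
      · rw [nwtE_add, nwtE_single]
        have hvj : v.2.1 = j := rfl
        rw [hvj]; omega
      · rw [wtE_add, wtE_single]
        have hvk : (v.2.2 : ℕ) = (-k).toNat := rfl
        rw [hvk]; omega
    · simp
    · intro a b _ _ ha hb
      rw [map_add]; exact Submodule.add_mem _ ha hb
    · intro c a _ ha
      rw [map_smul]; exact Submodule.smul_mem _ c ha
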